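/- Let Φ : ℝ^n → ℝ^n be symmetric (Φ ∘ P = P ∘ Φ for every permutation matrix P), extended by Φ(Λ) = sign(Λ) ⊙ Φ(|Λ|), and let F(X) = V_X diag(Φ(Λ_X)) U_X^* be the associated matrix-valued spectral function. Let X ∈ ℝ^{n×n} be a square matrix with n pairwise distinct singular values. Then F is differentiable at X if and only if Φ is differentiable at Λ_X, and in that case, for every direction δ ∈ ℝ^{n×n}, ∂F(X)[δ] = V_X ( 𝓜(Λ_X)[δ̄] + Γ_S(Λ_X) ⊙ 𝓟_S(δ̄) + Γ_A(Λ_X) ⊙ 𝓟_A(δ̄) ) U_X^*, where δ̄ = V_X^* δ U_X, 𝓜(Λ) = diag ∘ ∂Φ(Λ) ∘ diag, 𝓟_S(Y)_{i,j} = (Y_{i,j} + Y_{j,i})/2, 𝓟_A(Y)_{i,j} = (Y_{i,j} − Y_{j,i})/2, and writing Λ = Λ_X and Φ(Λ) = (Φ(Λ)_1,…,Φ(Λ)_n): Γ_S(Λ)_{i,j} = 0 if i = j and (Φ(Λ)_i − Φ(Λ)_j)/(Λ_i − Λ_j) if Λ_i ≠ Λ_j; Γ_A(Λ)_{i,j}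 = 0 if i = j, (Φ(Λ)_i + Φ(Λ)_j)/(Λ_i + Λ_j) if Λ_i > 0 or Λ_j > 0, and ∂Φ(Λ)_{i,i} − ∂Φ(Λ)_{i,j} otherwise. -/

import Mathlib

open Matrix

attribute [local instance] Matrix.normedAddCommGroup Matrix.normedSpace

/-- `(V, Λ, U)` is an SVD of the square matrix `X`: `V`, `U` orthogonal, `Λ` the vector
of nonnegative singular values, `X = V diag(Λ) Uᵀ`. -/
noncomputable def IsSVDsq {n : ℕ} (X V : Matrix (Fin n) (Fin n) ℝ) (Λ : Fin n → ℝ)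
    (U : Matrix (Fin n) (Fin n) ℝ) : Prop :=
  Vᵀ * V = 1 ∧ V * Vᵀ = 1 ∧ Uᵀ * U = 1 ∧ U * Uᵀ = 1 ∧ (∀ i, 0 ≤ Λ i) ∧
    X = V * Matrix.diagonal Λ * Uᵀ

/-- The `(i,j)` entry of the Jacobian `∂Φ(Λ)` of `Φ : ℝ^n → ℝ^n` at `Λ`. -/
noncomputable def jacEntry {n : ℕ} (Φ : (Fin n → ℝ) → Fin n → ℝ) (Λ : Fin n → ℝ)
    (i j : Fin n) : ℝ :=
  fderiv ℝ Φ Λ (Pi.single j 1) i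

/-- The matrix `Γ_S(Λ)`: zero on the diagonal and
`(Φ(Λ)_i − Φ(Λ)_j)/(Λ_i − Λ_j)` off the diagonal (where `Λ_i ≠ Λ_j`). -/
noncomputable def GammaS {n : ℕ} (Φ : (Fin n → ℝ) → Fin n → ℝ) (Λ : Fin n → ℝ) :
    Matrix (Fin n) (Fin n) ℝ :=
  Matrix.of fun i j => if i = j then 0 else (Φ Λ i - Φ Λ j) / (Λ i - Λ j)

/-- The matrix `Γ_A(Λ)`: zero on the diagonal, `(Φ(Λ)_i + Φ(Λ)_j)/(Λ_i + Λ_j)` if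
`Λ_i > 0` or `Λ_j > 0`, and `∂Φ(Λ)_{i,i} − ∂Φ(Λ)_{i,j}` otherwise. -/
noncomputable def GammaA {n : ℕ} (Φ : (Fin n → ℝ) → Fin n → ℝ) (Λ : Fin n → ℝ) :
    Matrix (Fin n) (Fin n) ℝ :=
  Matrix.of fun i j =>
    if i = j then 0
    else if 0 < Λ i ∨ 0 < Λ j then (Φ Λ i + Φ Λ j) / (Λ i + Λ j)
    else jacEntry Φ Λ i i - jacEntry Φ Λ i j

/-- The derivative formula
`D(X)[δ] = V_X (𝓜(Λ_X)[δ̄] + Γ_S(Λ_X) ⊙ 𝓟_S(δ̄) + Γ_A(Λ_X) ⊙ 𝓟_A(δ̄)) U_Xᵀ` of a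
matrix-valued spectral function, where `δ̄ = V_Xᵀ δ U_X`,
`𝓜(Λ)[Y] = diag(∂Φ(Λ)[diag Y])`, `𝓟_S(Y)_{i,j} = (Y_{i,j} + Y_{j,i})/2` and
`𝓟_A(Y)_{i,j} = (Y_{i,j} − Y_{j,i})/2`. -/
noncomputable def Dformula {n : ℕ} (Φ : (Fin n → ℝ) → Fin n → ℝ)
    (V : Matrix (Fin n) (Fin n) ℝ) (Λ : Fin n → ℝ) (U : Matrix (Fin n) (Fin n) ℝ)
    (δ : Matrix (Fin n) (Fin n) ℝ) : Matrix (Fin n) (Fin n) ℝ :=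
  let δb := Vᵀ * δ * U
  V * (Matrix.diagonal (fderiv ℝ Φ Λ (fun k => δb k k)) +
        Matrix.of (fun i j =>
          GammaS Φ Λ i j * ((δb i j + δb j i) / 2) +
          GammaA Φ Λ i j * ((δb i j - δb j i) / 2))) * Uᵀ

/-!
Near `X = V diag(Λ) Uᵀ` every matrix is `V Q₁ diag(Λ + d) Q₂ Uᵀ`, with `Q₁, Q₂` Cayley transforms
of skew matrices depending linearly on the perturbation. This chart has derivative the identity
at `0` because, for distinct nonnegative `Λᵢ`, the off-diagonal system `Ω Λ + Λ Ω' = Y` is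
solvable in skew `Ω, Ω'`. Thanks to the sign extension of `Φ`, `F` reads `V Q₁ diag(Φ(Λ + d)) Q₂ Uᵀ`
in the chart even where `Λ + d` has negative entries, so by the inverse function theorem `F` is
differentiable at `X` as soon as `Φ` is at `Λ`, and differentiating the chart expression gives the
formula. Conversely `Φ ν = diag (Vᵀ F(V diag(ν) Uᵀ) U)`.
-/

open scoped Topology

section MatrixCalculus

variable {ι : Type*} [Fintype ι]
  {E : Type*} [NormedAddCommGroup E] [NormedSpace ℝ E] {f g : E → Matrix ι ι ℝ} {x : E}
  {k : WithTop ℕ∞}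

theorem contDiffAt_matrix_iff :
    ContDiffAt ℝ k f x ↔ ∀ i j, ContDiffAt ℝ k (fun y => f y i j) x :=
  ⟨fun h i j => contDiffAt_pi.1 (contDiffAt_pi.1 h i) j,
    fun h => contDiffAt_pi.2 fun i => contDiffAt_pi.2 fun j => h i j⟩

variable [DecidableEq ι]

theorem contDiff_matrix_det : ContDiff ℝ k fun M : Matrix ι ι ℝ => M.det := by
  simp only [det_apply']
  fun_prop

theorem contDiff_matrix_adjugate : ContDiff ℝ k (adjugate : Matrix ι ι ℝ → Matrix ι ι ℝ) := by
  refine contDiff_iff_contDiffAt.2 fun M => contDiffAt_matrix_iff.2 fun i j => ?_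
  simp_rw [adjugate_apply]
  refine contDiff_matrix_det.contDiffAt.comp _ (contDiffAt_matrix_iff.2 fun a b => ?_)
  simp only [updateRow_apply]
  split_ifs <;> fun_prop

theorem contDiffAt_matrix_inv {M : Matrix ι ι ℝ} (hM : M.det ≠ 0) :
    ContDiffAt ℝ k Inv.inv M := by
  have hinv : (Inv.inv : Matrix ι ι ℝ → Matrix ι ι ℝ) = fun N => N.det⁻¹ • N.adjugate := by
    ext1 N
    rw [inv_def, Ring.inverse_eq_inv']
  rw [hinv]
  exact ((contDiffAt_inv ℝ hM).comp M contDiff_matrix_det.contDiffAt).smul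
    contDiff_matrix_adjugate.contDiffAt

variable (ι) in
noncomputable def matrixMulCLM : Matrix ι ι ℝ →L[ℝ] Matrix ι ι ℝ →L[ℝ] Matrix ι ι ℝ :=
  (LinearMap.mul ℝ (Matrix ι ι ℝ)).toContinuousBilinearMap

theorem ContDiffAt.matrix_mul (hf : ContDiffAt ℝ k f x) (hg : ContDiffAt ℝ k g x) :
    ContDiffAt ℝ k (fun y => f y * g y) x := by
  exact ((matrixMulCLM ι).contDiff.contDiffAt.comp x hf).clm_apply hg

theorem hasFDerivAt_matrix_mul {f' g' : E →L[ℝ] Matrix ι ι ℝ} (hf : HasFDerivAt f f' x)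
    (hg : HasFDerivAt g g' x) :
    HasFDerivAt (fun y => f y * g y)
      ((matrixMulCLM ι).precompR E (f x) g' + (matrixMulCLM ι).precompL E f' (g x)) x :=
  (matrixMulCLM ι).hasFDerivAt_of_bilinear hf hg

theorem DifferentiableAt.matrix_mul (hf : DifferentiableAt ℝ f x)
    (hg : DifferentiableAt ℝ g x) : DifferentiableAt ℝ (fun y => f y * g y) x :=
  (hasFDerivAt_matrix_mul hf.hasFDerivAt hg.hasFDerivAt).differentiableAt

theorem hasFDerivAt_matrix_mul_comp_mul {f : Matrix ι ι ℝ → Matrix ι ι ℝ}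
    {f' : Matrix ι ι ℝ →L[ℝ] Matrix ι ι ℝ} {A B C D y : Matrix ι ι ℝ}
    (hf : HasFDerivAt f f' (A * y * B)) :
    HasFDerivAt (fun z => C * f (A * z * B) * D)
      ((((matrixMulCLM ι).flip D).comp (matrixMulCLM ι C)).comp
        (f'.comp (((matrixMulCLM ι).flip B).comp (matrixMulCLM ι A)))) y :=
  (((matrixMulCLM ι).flip D).comp (matrixMulCLM ι C)).hasFDerivAt.comp y
    (hf.comp y (((matrixMulCLM ι).flip B).comp (matrixMulCLM ι A)).hasFDerivAt)

theorem fderiv_matrix_mul_comp_mul_apply {f : Matrix ι ι ℝ → Matrix ι ι ℝ}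
    {A B C D y : Matrix ι ι ℝ} (hf : DifferentiableAt ℝ f (A * y * B)) (w : Matrix ι ι ℝ) :
    fderiv ℝ (fun z => C * f (A * z * B) * D) y w =
      C * fderiv ℝ f (A * y * B) (A * w * B) * D :=
  congrArg (· w) (hasFDerivAt_matrix_mul_comp_mul hf.hasFDerivAt).fderiv

end MatrixCalculus

theorem HasStrictFDerivAt.hasFDerivAt_of_comp {𝕜 : Type*} [NontriviallyNormedField 𝕜]
    {E F G : Type*} [NormedAddCommGroup E] [NormedSpace 𝕜 E] [CompleteSpace E]
    [NormedAddCommGroup F] [NormedSpace 𝕜 F] [NormedAddCommGroup G] [NormedSpace 𝕜 G]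
    {ψ : E → F} {ψ' : E ≃L[𝕜] F} {a : E} (hψ : HasStrictFDerivAt ψ (ψ' : E →L[𝕜] F) a)
    {f : F → G} {g' : E →L[𝕜] G} (hf : HasFDerivAt (f ∘ ψ) g' a) :
    HasFDerivAt f (g'.comp (ψ'.symm : F →L[𝕜] E)) (ψ a) := by
  have hf' : HasFDerivAt (f ∘ ψ) g' (hψ.localInverse ψ ψ' a (ψ a)) := by
    rwa [hψ.localInverse_apply_image]
  refine (hf'.comp (ψ a) hψ.to_localInverse.hasFDerivAt).congr_of_eventuallyEq ?_
  filter_upwards [hψ.eventually_right_inverse] with y hy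
  simp [hy]

namespace Matrix

variable {ι : Type*} [Fintype ι] {k : WithTop ℕ∞}

theorem dotProduct_mulVec_self_eq_zero_of_transpose_eq_neg {S : Matrix ι ι ℝ} (hS : Sᵀ = -S)
    (v : ι → ℝ) : v ⬝ᵥ S *ᵥ v = 0 := by
  have h : v ⬝ᵥ S *ᵥ v = -(v ⬝ᵥ S *ᵥ v) := by
    conv_lhs => rw [dotProduct_mulVec, ← mulVec_transpose, hS, neg_mulVec, dotProduct_comm]
    rw [dotProduct_neg]
  linarith

variable [DecidableEq ι]

theorem det_one_sub_ne_zero_of_transpose_eq_neg {S : Matrix ι ι ℝ} (hS : Sᵀ = -S) :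
    (1 - S).det ≠ 0 := by
  intro hdet
  obtain ⟨v, hv, hSv⟩ := exists_mulVec_eq_zero_iff.2 hdet
  rw [sub_mulVec, one_mulVec, sub_eq_zero] at hSv
  have hvv : v ⬝ᵥ v = 0 := by
    nth_rewrite 2 [hSv]
    exact dotProduct_mulVec_self_eq_zero_of_transpose_eq_neg hS v
  exact hv (dotProduct_self_eq_zero.1 hvv)

/-- The Cayley transform, scaled so that its derivative at `0` is the identity. -/
noncomputable def cayley (S : Matrix ι ι ℝ) : Matrix ι ι ℝ :=
  (1 + (2⁻¹ : ℝ) • S) * (1 - (2⁻¹ : ℝ) • S)⁻¹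

@[simp]
theorem cayley_zero : cayley (0 : Matrix ι ι ℝ) = 1 := by
  simp [cayley]

theorem cayley_mem_orthogonalGroup {S : Matrix ι ι ℝ} (hS : Sᵀ = -S) :
    cayley S ∈ orthogonalGroup ι ℝ := by
  set P : Matrix ι ι ℝ := 1 + (2⁻¹ : ℝ) • S
  set N : Matrix ι ι ℝ := 1 - (2⁻¹ : ℝ) • S
  have hPT : Pᵀ = N := by simp [P, N, hS, sub_eq_add_neg]
  have hNT : Nᵀ = P := by simp [P, N, hS, sub_eq_add_neg]
  have hP : IsUnit P.det := by
    have h := det_one_sub_ne_zero_of_transpose_eq_neg (S := -((2⁻¹ : ℝ) • S)) (by simp [hS])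
    rw [sub_neg_eq_add] at h
    exact h.isUnit
  have hN : IsUnit N.det :=
    (det_one_sub_ne_zero_of_transpose_eq_neg (S := (2⁻¹ : ℝ) • S) (by simp [hS])).isUnit
  have hcomm : N * P = P * N := by
    simp only [P, N, mul_add, add_mul, mul_sub, sub_mul, one_mul, mul_one]
    abel
  rw [mem_orthogonalGroup_iff']
  calc (cayley S)ᵀ * cayley S = P⁻¹ * (N * P) * N⁻¹ := by
        rw [show cayley S = P * N⁻¹ from rfl, transpose_mul, transpose_nonsing_inv, hNT, hPT]
        simp only [Matrix.mul_assoc]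
    _ = 1 := by
        rw [hcomm, ← Matrix.mul_assoc, nonsing_inv_mul _ hP, Matrix.one_mul, mul_nonsing_inv _ hN]

theorem contDiffAt_cayley_zero : ContDiffAt ℝ k (cayley : Matrix ι ι ℝ → Matrix ι ι ℝ) 0 := by
  have hN : ContDiffAt ℝ k (fun S : Matrix ι ι ℝ => (1 - (2⁻¹ : ℝ) • S)⁻¹) 0 :=
    (contDiffAt_matrix_inv (by simp)).comp 0 (by fun_prop)
  exact ContDiffAt.matrix_mul (by fun_prop) hN

theorem hasFDerivAt_cayley_zero :
    HasFDerivAt (cayley : Matrix ι ι ℝ → Matrix ι ι ℝ) (ContinuousLinearMap.id ℝ _) 0 := by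
  have hN : ContDiffAt ℝ 1 (fun S : Matrix ι ι ℝ => (1 - (2⁻¹ : ℝ) • S)⁻¹) 0 :=
    (contDiffAt_matrix_inv (by simp)).comp 0 (by fun_prop)
  have hNunit : ∀ᶠ S : Matrix ι ι ℝ in 𝓝 0, IsUnit (1 - (2⁻¹ : ℝ) • S).det := by
    have hcont : ContinuousAt (fun S : Matrix ι ι ℝ => (1 - (2⁻¹ : ℝ) • S).det) 0 := by
      fun_prop
    filter_upwards [hcont.eventually_ne (y := 0) (by simp)] with S hS using hS.isUnit
  -- near `0`, `cayley S = 1 + S (1 - ½S)⁻¹`: the derivative of the inverse is never needed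
  have hcayley : (fun S : Matrix ι ι ℝ => 1 + S * (1 - (2⁻¹ : ℝ) • S)⁻¹) =ᶠ[𝓝 0] cayley := by
    filter_upwards [hNunit] with S hS
    rw [cayley, show 1 + (2⁻¹ : ℝ) • S = (1 - (2⁻¹ : ℝ) • S) + S by module, add_mul,
      mul_nonsing_inv _ hS]
  refine (((hasFDerivAt_matrix_mul (hasFDerivAt_id 0)
    (hN.differentiableAt one_ne_zero).hasFDerivAt).const_add 1).congr_of_eventuallyEq
      hcayley.symm).congr_fderiv ?_
  ext1 w
  simp only [map_zero, _root_.zero_apply, zero_add, smul_zero, sub_zero, inv_one]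
  exact Matrix.mul_one w

end Matrix

theorem sq_sub_sq_ne_zero_of_injective {ι : Type*} {Λ : ι → ℝ} (hΛ : ∀ i, 0 ≤ Λ i)
    (hinj : Function.Injective Λ) {i j : ι} (hij : i ≠ j) : Λ j ^ 2 - Λ i ^ 2 ≠ 0 :=
  sub_ne_zero.2 fun h => hij (hinj ((pow_left_inj₀ (hΛ j) (hΛ i) two_ne_zero).1 h).symm)

section SVDChart

variable {ι : Type*} [Fintype ι] (Λ : ι → ℝ)

/-- With `svdRightGen`, the skew solution `(Ω, Ω')` of `Ω Λ + Λ Ω' = Y` off the diagonal; both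
vanish on the diagonal, where the denominator is `0` and `x / 0 = 0`. -/
noncomputable def svdLeftGen : Matrix ι ι ℝ →L[ℝ] Matrix ι ι ℝ :=
  LinearMap.toContinuousLinearMap
    { toFun := fun Y => of fun i j => (Λ j * Y i j + Λ i * Y j i) / (Λ j ^ 2 - Λ i ^ 2)
      map_add' := fun Y Z => by
        ext i j
        simp only [Matrix.add_apply, of_apply]
        ring
      map_smul' := fun c Y => by
        ext i j
        simp only [Matrix.smul_apply, of_apply, smul_eq_mul, RingHom.id_apply]
        ring }

noncomputable def svdRightGen : Matrix ι ι ℝ →L[ℝ] Matrix ι ι ℝ :=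
  LinearMap.toContinuousLinearMap
    { toFun := fun Y => of fun i j => (Λ i * Y i j + Λ j * Y j i) / (Λ i ^ 2 - Λ j ^ 2)
      map_add' := fun Y Z => by
        ext i j
        simp only [Matrix.add_apply, of_apply]
        ring
      map_smul' := fun c Y => by
        ext i j
        simp only [Matrix.smul_apply, of_apply, smul_eq_mul, RingHom.id_apply]
        ring }

theorem svdLeftGen_apply (Y : Matrix ι ι ℝ) (i j : ι) :
    svdLeftGen Λ Y i j = (Λ j * Y i j + Λ i * Y j i) / (Λ j ^ 2 - Λ i ^ 2) := rfl

theorem svdRightGen_apply (Y : Matrix ι ι ℝ) (i j : ι) :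
    svdRightGen Λ Y i j = (Λ i * Y i j + Λ j * Y j i) / (Λ i ^ 2 - Λ j ^ 2) := rfl

theorem transpose_svdLeftGen (Y : Matrix ι ι ℝ) : (svdLeftGen Λ Y)ᵀ = -svdLeftGen Λ Y := by
  ext i j
  simp only [transpose_apply, Matrix.neg_apply, svdLeftGen_apply]
  rw [show Λ i ^ 2 - Λ j ^ 2 = -(Λ j ^ 2 - Λ i ^ 2) by ring, div_neg]
  ring

theorem transpose_svdRightGen (Y : Matrix ι ι ℝ) : (svdRightGen Λ Y)ᵀ = -svdRightGen Λ Y := by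
  ext i j
  simp only [transpose_apply, Matrix.neg_apply, svdRightGen_apply]
  rw [show Λ j ^ 2 - Λ i ^ 2 = -(Λ i ^ 2 - Λ j ^ 2) by ring, div_neg]
  ring

variable [DecidableEq ι]

theorem svdLeftGen_mul_add_mul_svdRightGen_apply (φ : ι → ℝ) (w : Matrix ι ι ℝ) (i j : ι) :
    (svdLeftGen Λ w * diagonal φ + diagonal φ * svdRightGen Λ w) i j =
      ((Λ j * φ j - Λ i * φ i) * w i j + (Λ i * φ j - Λ j * φ i) * w j i) /
        (Λ j ^ 2 - Λ i ^ 2) := by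
  rw [Matrix.add_apply, mul_diagonal, diagonal_mul, svdLeftGen_apply, svdRightGen_apply,
    show Λ i ^ 2 - Λ j ^ 2 = -(Λ j ^ 2 - Λ i ^ 2) by ring, div_neg]
  ring

/-- With `g = id` a chart of the matrices near `diagonal Λ`; with `g = Φ` the spectral function
read in that chart. -/
noncomputable def svdChart (g : (ι → ℝ) → ι → ℝ) (Y : Matrix ι ι ℝ) : Matrix ι ι ℝ :=
  cayley (svdLeftGen Λ Y) * diagonal (g (Λ + Y.diag)) * cayley (svdRightGen Λ Y)

variable {Λ}

@[simp]
theorem svdChart_zero (g : (ι → ℝ) → ι → ℝ) : svdChart Λ g 0 = diagonal (g Λ) := by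
  simp [svdChart]

theorem hasFDerivAt_diagonal_comp_add_diag {g : (ι → ℝ) → ι → ℝ} {g' : (ι → ℝ) →L[ℝ] ι → ℝ}
    (hg : HasFDerivAt g g' Λ) :
    HasFDerivAt (fun Y : Matrix ι ι ℝ => diagonal (g (Λ + Y.diag)))
      ((diagonalLinearMap ι ℝ ℝ).toContinuousLinearMap.comp
        (g'.comp (diagLinearMap ι ℝ ℝ).toContinuousLinearMap)) 0 := by
  have hdiag := ((diagLinearMap ι ℝ ℝ).toContinuousLinearMap.hasFDerivAt (x := 0)).const_add Λ
  have hg0 : HasFDerivAt g g' (Λ + (diagLinearMap ι ℝ ℝ).toContinuousLinearMap 0) := by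
    simpa using hg
  exact (diagonalLinearMap ι ℝ ℝ).toContinuousLinearMap.hasFDerivAt.comp 0 (hg0.comp 0 hdiag)

theorem hasFDerivAt_cayley_clm (L : Matrix ι ι ℝ →L[ℝ] Matrix ι ι ℝ) :
    HasFDerivAt (fun Y => cayley (L Y)) L 0 := by
  have h := hasFDerivAt_cayley_zero (ι := ι)
  rw [← map_zero L] at h
  exact h.comp 0 L.hasFDerivAt

theorem contDiffAt_cayley_clm {k : WithTop ℕ∞} (L : Matrix ι ι ℝ →L[ℝ] Matrix ι ι ℝ) :
    ContDiffAt ℝ k (fun Y => cayley (L Y)) 0 := by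
  have h := contDiffAt_cayley_zero (ι := ι) (k := k)
  rw [← map_zero L] at h
  exact h.comp 0 L.contDiff.contDiffAt

theorem differentiableAt_svdChart {g : (ι → ℝ) → ι → ℝ} (hg : DifferentiableAt ℝ g Λ) :
    DifferentiableAt ℝ (svdChart Λ g) 0 :=
  (((hasFDerivAt_cayley_clm _).differentiableAt).matrix_mul
    (hasFDerivAt_diagonal_comp_add_diag hg.hasFDerivAt).differentiableAt).matrix_mul
      (hasFDerivAt_cayley_clm _).differentiableAt

theorem fderiv_svdChart_apply {g : (ι → ℝ) → ι → ℝ} (hg : DifferentiableAt ℝ g Λ)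
    (w : Matrix ι ι ℝ) :
    fderiv ℝ (svdChart Λ g) 0 w = svdLeftGen Λ w * diagonal (g Λ) +
      diagonal (fderiv ℝ g Λ w.diag) + diagonal (g Λ) * svdRightGen Λ w := by
  have h := hasFDerivAt_matrix_mul
    (hasFDerivAt_matrix_mul (hasFDerivAt_cayley_clm (svdLeftGen Λ))
      (hasFDerivAt_diagonal_comp_add_diag hg.hasFDerivAt))
    (hasFDerivAt_cayley_clm (svdRightGen Λ))
  refine (congrArg (· w) h.fderiv).trans ?_
  change cayley (svdLeftGen Λ 0) * diagonal (g (Λ + diag 0)) * svdRightGen Λ w +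
    (cayley (svdLeftGen Λ 0) * diagonal (fderiv ℝ g Λ w.diag) +
      svdLeftGen Λ w * diagonal (g (Λ + diag 0))) * cayley (svdRightGen Λ 0) = _
  simp only [map_zero, cayley_zero, diag_zero, add_zero, Matrix.one_mul, Matrix.mul_one]
  abel

theorem contDiffAt_svdChart_id {k : WithTop ℕ∞} : ContDiffAt ℝ k (svdChart Λ id) 0 := by
  have hD : ContDiff ℝ k fun Y : Matrix ι ι ℝ => diagonal (Λ + Y.diag) :=
    (diagonalLinearMap ι ℝ ℝ).toContinuousLinearMap.contDiff.comp
      (contDiff_const.add (diagLinearMap ι ℝ ℝ).toContinuousLinearMap.contDiff)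
  exact ((contDiffAt_cayley_clm _).matrix_mul hD.contDiffAt).matrix_mul (contDiffAt_cayley_clm _)

theorem fderiv_svdChart_id (hΛ : ∀ i, 0 ≤ Λ i) (hinj : Function.Injective Λ) :
    fderiv ℝ (svdChart Λ id) 0 = ContinuousLinearMap.id ℝ (Matrix ι ι ℝ) := by
  ext1 w
  rw [fderiv_svdChart_apply differentiableAt_id, fderiv_id, add_right_comm]
  ext i j
  rw [Matrix.add_apply, svdLeftGen_mul_add_mul_svdRightGen_apply]
  rcases eq_or_ne i j with rfl | hij
  · simp
  · rw [diagonal_apply_ne _ hij, add_zero, ContinuousLinearMap.id_apply, id]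
    field_simp [sq_sub_sq_ne_zero_of_injective hΛ hinj hij]
    ring

theorem hasStrictFDerivAt_conj_svdChart_id {V U : Matrix ι ι ℝ}
    (hV : V ∈ orthogonalGroup ι ℝ) (hU : U ∈ orthogonalGroup ι ℝ) (hΛ : ∀ i, 0 ≤ Λ i)
    (hinj : Function.Injective Λ) :
    HasStrictFDerivAt (fun Y => V * svdChart Λ id (Vᵀ * Y * U) * Uᵀ)
      (ContinuousLinearEquiv.refl ℝ (Matrix ι ι ℝ) : Matrix ι ι ℝ →L[ℝ] Matrix ι ι ℝ) 0 := by
  have hchart : ContDiffAt ℝ 1 (svdChart Λ id) (Vᵀ * 0 * U) := by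
    rw [Matrix.mul_zero, Matrix.zero_mul]
    exact contDiffAt_svdChart_id
  refine ContDiffAt.hasStrictFDerivAt' ?_ ?_ one_ne_zero
  · have hin : ContDiffAt ℝ 1 (fun Y : Matrix ι ι ℝ => Vᵀ * Y * U) 0 :=
      (contDiffAt_const.matrix_mul contDiffAt_id).matrix_mul contDiffAt_const
    have hmid : ContDiffAt ℝ 1 (fun Y => svdChart Λ id (Vᵀ * Y * U)) 0 :=
      ContDiffAt.comp (g := svdChart Λ id) 0 hchart hin
    exact (contDiffAt_const.matrix_mul hmid).matrix_mul contDiffAt_const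
  · refine (hasFDerivAt_matrix_mul_comp_mul
      (hchart.differentiableAt one_ne_zero).hasFDerivAt).congr_fderiv ?_
    ext1 δ
    change V * fderiv ℝ (svdChart Λ id) (Vᵀ * 0 * U) (Vᵀ * δ * U) * Uᵀ = δ
    rw [Matrix.mul_zero, Matrix.zero_mul, fderiv_svdChart_id hΛ hinj,
      ContinuousLinearMap.id_apply, ← Matrix.mul_assoc, ← Matrix.mul_assoc,
      (mem_orthogonalGroup_iff ι ℝ).1 hV, Matrix.one_mul, Matrix.mul_assoc,
      (mem_orthogonalGroup_iff ι ℝ).1 hU, Matrix.mul_one]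

end SVDChart

section SpectralFunction

variable {ι : Type*} [Fintype ι] [DecidableEq ι]

/-- The SVD formula for `F`, extended to arbitrary real `ν` (this is what the sign extension of `Φ`
buys). -/
def IsSpectralFunction (Φ : (ι → ℝ) → ι → ℝ) (F : Matrix ι ι ℝ → Matrix ι ι ℝ) : Prop :=
  ∀ V W ν, V ∈ orthogonalGroup ι ℝ → W ∈ orthogonalGroup ι ℝ →
    F (V * diagonal ν * W) = V * diagonal (Φ ν) * W

variable {Φ : (ι → ℝ) → ι → ℝ} {F : Matrix ι ι ℝ → Matrix ι ι ℝ} {V U : Matrix ι ι ℝ}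
  {Λ : ι → ℝ}

theorem IsSpectralFunction.apply_svdChart (hF : IsSpectralFunction Φ F) {W : Matrix ι ι ℝ}
    (hV : V ∈ orthogonalGroup ι ℝ) (hW : W ∈ orthogonalGroup ι ℝ) (Y : Matrix ι ι ℝ) :
    F (V * svdChart Λ id Y * W) = V * svdChart Λ Φ Y * W := by
  have hL := cayley_mem_orthogonalGroup (transpose_svdLeftGen Λ Y)
  have hR := cayley_mem_orthogonalGroup (transpose_svdRightGen Λ Y)
  simpa only [svdChart, id, Matrix.mul_assoc] using
    hF _ _ (Λ + Y.diag) (mul_mem hV hL) (mul_mem hR hW)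

theorem IsSpectralFunction.differentiableAt_of_differentiableAt (hF : IsSpectralFunction Φ F)
    (hV : V ∈ orthogonalGroup ι ℝ) (hU : U ∈ orthogonalGroup ι ℝ)
    (hFd : DifferentiableAt ℝ F (V * diagonal Λ * Uᵀ)) : DifferentiableAt ℝ Φ Λ := by
  have hΦ : Φ = fun ν => (Vᵀ * F (V * diagonal ν * Uᵀ) * U).diag := by
    ext ν i
    rw [hF _ _ ν hV (transpose_mem_unitaryGroup_iff.2 hU), ← Matrix.mul_assoc,
      ← Matrix.mul_assoc, (mem_orthogonalGroup_iff' _ ℝ).1 hV, Matrix.one_mul, Matrix.mul_assoc,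
      (mem_orthogonalGroup_iff' _ ℝ).1 hU, Matrix.mul_one, diag_diagonal]
  have hin : DifferentiableAt ℝ (fun ν => V * diagonal ν * Uᵀ) Λ :=
    ((differentiableAt_const V).matrix_mul
      (diagonalLinearMap ι ℝ ℝ).toContinuousLinearMap.differentiableAt).matrix_mul
      (differentiableAt_const _)
  have hout : DifferentiableAt ℝ (fun ν => Vᵀ * F (V * diagonal ν * Uᵀ) * U) Λ :=
    ((differentiableAt_const _).matrix_mul (DifferentiableAt.comp (g := F) Λ hFd hin)).matrix_mul
      (differentiableAt_const _)
  rw [hΦ]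
  exact (diagLinearMap ι ℝ ℝ).toContinuousLinearMap.differentiableAt.comp Λ hout

theorem IsSpectralFunction.hasFDerivAt (hF : IsSpectralFunction Φ F)
    (hV : V ∈ orthogonalGroup ι ℝ) (hU : U ∈ orthogonalGroup ι ℝ) (hΛ : ∀ i, 0 ≤ Λ i)
    (hinj : Function.Injective Λ) (hΦ : DifferentiableAt ℝ Φ Λ) :
    HasFDerivAt F (fderiv ℝ (fun Y => V * svdChart Λ Φ (Vᵀ * Y * U) * Uᵀ) 0)
      (V * diagonal Λ * Uᵀ) := by
  have hFG : (F ∘ fun Y => V * svdChart Λ id (Vᵀ * Y * U) * Uᵀ) =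
      fun Y => V * svdChart Λ Φ (Vᵀ * Y * U) * Uᵀ :=
    funext fun Y => hF.apply_svdChart hV (transpose_mem_unitaryGroup_iff.2 hU) _
  have hG : DifferentiableAt ℝ (svdChart Λ Φ) (Vᵀ * 0 * U) := by
    rw [Matrix.mul_zero, Matrix.zero_mul]
    exact differentiableAt_svdChart hΦ
  have hFGd : DifferentiableAt ℝ (F ∘ fun Y => V * svdChart Λ id (Vᵀ * Y * U) * Uᵀ) 0 := by
    rw [hFG]
    exact (hasFDerivAt_matrix_mul_comp_mul hG.hasFDerivAt).differentiableAt
  have h := (hasStrictFDerivAt_conj_svdChart_id hV hU hΛ hinj).hasFDerivAt_of_comp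
    hFGd.hasFDerivAt
  rw [hFG, show Vᵀ * 0 * U = 0 by simp, svdChart_zero] at h
  exact h.congr_fderiv (ContinuousLinearMap.ext fun _ => rfl)

end SpectralFunction

section SVD

variable {n : ℕ}

theorem isSVDsq_iff {X V U : Matrix (Fin n) (Fin n) ℝ} {Λ : Fin n → ℝ} :
    IsSVDsq X V Λ U ↔ V ∈ orthogonalGroup (Fin n) ℝ ∧ U ∈ orthogonalGroup (Fin n) ℝ ∧
      (∀ i, 0 ≤ Λ i) ∧ X = V * diagonal Λ * Uᵀ := by
  simp only [IsSVDsq, mem_orthogonalGroup_iff]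
  constructor
  · rintro ⟨-, hV, -, hU, hΛ, hX⟩
    exact ⟨hV, hU, hΛ, hX⟩
  · rintro ⟨hV, hU, hΛ, hX⟩
    exact ⟨mul_eq_one_comm.1 hV, hV, mul_eq_one_comm.1 hU, hU, hΛ, hX⟩

variable {Φ : (Fin n → ℝ) → Fin n → ℝ}

theorem isSpectralFunction_of_isSVDsq
    (hext : ∀ Λ : Fin n → ℝ, Φ Λ = fun i => Real.sign (Λ i) * Φ (fun j => |Λ j|) i)
    {F : Matrix (Fin n) (Fin n) ℝ → Matrix (Fin n) (Fin n) ℝ}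
    (hF : ∀ Z V Λ U, IsSVDsq Z V Λ U → F Z = V * diagonal (Φ Λ) * Uᵀ) :
    IsSpectralFunction Φ F := by
  intro V W ν hV hW
  -- move the signs of `ν` into the left orthogonal factor
  set d : Fin n → ℝ := fun i => if ν i < 0 then -1 else 1
  have hd : diagonal d ∈ orthogonalGroup (Fin n) ℝ := by
    rw [mem_orthogonalGroup_iff, diagonal_transpose, diagonal_mul_diagonal, ← diagonal_one]
    congr 1
    ext i
    by_cases h : ν i < 0 <;> simp [d, h]
  have hdν : diagonal d * diagonal (fun i => |ν i|) = diagonal ν := by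
    rw [diagonal_mul_diagonal]
    congr 1
    ext i
    rcases lt_or_ge (ν i) 0 with h | h <;> simp [d, h, not_lt.2, abs_of_neg, abs_of_nonneg]
  have hdΦ : diagonal d * diagonal (Φ fun i => |ν i|) = diagonal (Φ ν) := by
    rw [diagonal_mul_diagonal, hext ν]
    congr 1
    ext i
    rcases lt_trichotomy (ν i) 0 with h | h | h
    · simp [d, h, Real.sign_of_neg h]
    · rw [hext fun j => |ν j|]
      simp [d, h]
    · simp [d, not_lt.2 h.le, Real.sign_of_pos h]
  have hsvd : IsSVDsq (V * diagonal ν * W) (V * diagonal d) (fun i => |ν i|) Wᵀ :=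
    isSVDsq_iff.2 ⟨mul_mem hV hd, transpose_mem_unitaryGroup_iff.2 hW, fun i => abs_nonneg _, by
      rw [transpose_transpose, Matrix.mul_assoc V (diagonal d), hdν]⟩
  rw [hF _ _ _ _ hsvd, transpose_transpose, Matrix.mul_assoc V (diagonal d), hdΦ]

theorem svdLeftGen_mul_add_mul_svdRightGen_eq_gamma {Λ : Fin n → ℝ} (hΛ : ∀ i, 0 ≤ Λ i)
    (hinj : Function.Injective Λ) (ψ : Fin n → ℝ) (w : Matrix (Fin n) (Fin n) ℝ) :
    svdLeftGen Λ w * diagonal (Φ Λ) + diagonal ψ + diagonal (Φ Λ) * svdRightGen Λ w =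
      diagonal ψ + of fun i j => GammaS Φ Λ i j * ((w i j + w j i) / 2) +
        GammaA Φ Λ i j * ((w i j - w j i) / 2) := by
  rw [add_right_comm, add_comm]
  congr 1
  ext i j
  rw [svdLeftGen_mul_add_mul_svdRightGen_apply, of_apply]
  rcases eq_or_ne i j with rfl | hij
  · simp [GammaS, GammaA]
  · have hpos : 0 < Λ i ∨ 0 < Λ j := by
      by_contra! h
      exact hij (hinj ((h.1.antisymm (hΛ i)).trans (h.2.antisymm (hΛ j)).symm))
    have hsub : Λ i - Λ j ≠ 0 := sub_ne_zero.2 (hinj.ne hij)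
    have hadd : Λ i + Λ j ≠ 0 := by rcases hpos with h | h <;> linarith [hΛ i, hΛ j]
    simp only [GammaS, GammaA, of_apply, if_neg hij, if_pos hpos]
    field_simp [sq_sub_sq_ne_zero_of_injective hΛ hinj hij, hsub, hadd]
    ring

end SVD

theorem matrix_spectral_function_deriv_general {n : ℕ}
    (Φ : (Fin n → ℝ) → Fin n → ℝ)
    (hext : ∀ Λ : Fin n → ℝ, Φ Λ = fun i => Real.sign (Λ i) * Φ (fun j => |Λ j|) i)
    (F : Matrix (Fin n) (Fin n) ℝ → Matrix (Fin n) (Fin n) ℝ)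
    (hF : ∀ Z V' Λ' U', IsSVDsq Z V' Λ' U' → F Z = V' * Matrix.diagonal (Φ Λ') * U'ᵀ)
    (X V : Matrix (Fin n) (Fin n) ℝ) (Λ : Fin n → ℝ) (U : Matrix (Fin n) (Fin n) ℝ)
    (hSVD : IsSVDsq X V Λ U) (hdist : ∀ i j : Fin n, i ≠ j → Λ i ≠ Λ j) :
    (DifferentiableAt ℝ F X ↔ DifferentiableAt ℝ Φ Λ) ∧
      (DifferentiableAt ℝ Φ Λ →
        ∀ δ : Matrix (Fin n) (Fin n) ℝ, fderiv ℝ F X δ = Dformula Φ V Λ U δ) := by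
  have hspec := isSpectralFunction_of_isSVDsq hext hF
  obtain ⟨hV, hU, hΛ, rfl⟩ := isSVDsq_iff.1 hSVD
  have hinj : Function.Injective Λ := fun i j h => by_contra fun hij => hdist i j hij h
  have hderiv := hspec.hasFDerivAt hV hU hΛ hinj
  refine ⟨⟨hspec.differentiableAt_of_differentiableAt hV hU,
    fun hΦ => (hderiv hΦ).differentiableAt⟩, fun hΦ δ => ?_⟩
  have hG : DifferentiableAt ℝ (svdChart Λ Φ) (Vᵀ * 0 * U) := by
    rw [Matrix.mul_zero, Matrix.zero_mul]
    exact differentiableAt_svdChart hΦ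
  rw [(hderiv hΦ).fderiv, fderiv_matrix_mul_comp_mul_apply hG, Matrix.mul_zero, Matrix.zero_mul,
    fderiv_svdChart_apply hΦ, svdLeftGen_mul_add_mul_svdRightGen_eq_gamma hΛ hinj]
  rfl

/-- Derivative of a matrix-valued spectral function `F(X) = V_X diag(Φ(Λ_X)) U_Xᵀ`,
where `Φ` is symmetric and extended by `Φ(Λ) = sign(Λ) ⊙ Φ(|Λ|)`, at a square matrix
`X` with pairwise distinct singular values: `F` is differentiable at `X` if and only if
`Φ` is differentiable at `Λ_X`, in which case `∂F(X)[δ] = D(X)[δ]`. -/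
theorem matrix_spectral_function_deriv {n : ℕ}
    (Φ : (Fin n → ℝ) → Fin n → ℝ)
    (hsym : ∀ (σ : Equiv.Perm (Fin n)) (Λ : Fin n → ℝ),
      Φ (fun i => Λ (σ i)) = fun i => Φ Λ (σ i))
    (hext : ∀ Λ : Fin n → ℝ, Φ Λ = fun i => Real.sign (Λ i) * Φ (fun j => |Λ j|) i)
    (F : Matrix (Fin n) (Fin n) ℝ → Matrix (Fin n) (Fin n) ℝ)
    (hF : ∀ Z V' Λ' U', IsSVDsq Z V' Λ' U' → F Z = V' * Matrix.diagonal (Φ Λ') * U'ᵀ)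
    (X V : Matrix (Fin n) (Fin n) ℝ) (Λ : Fin n → ℝ) (U : Matrix (Fin n) (Fin n) ℝ)
    (hSVD : IsSVDsq X V Λ U) (hdist : ∀ i j : Fin n, i ≠ j → Λ i ≠ Λ j) :
    (DifferentiableAt ℝ F X ↔ DifferentiableAt ℝ Φ Λ) ∧
      (DifferentiableAt ℝ Φ Λ →
        ∀ δ : Matrix (Fin n) (Fin n) ℝ, fderiv ℝ F X δ = Dformula Φ V Λ U δ) :=
  matrix_spectral_function_deriv_general Φ hext F hF X V Λ U hSVD hdist
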